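/- Normalization does not increase DAG-size: for every term t, |sub_dag(⌈t⌉)| ≤ |sub_dag(t)|. -/

import Mathlib

inductive BinOp : Type
  | enc | aenc | pair | sig
deriving DecidableEq

inductive Term : Type
  | atom : ℕ → Term
  | var  : ℕ → Term
  | bin  : BinOp → Term → Term → Term
  | priv : Term → Term
  | aci  : List Term → Term

def Term.subst (σ : ℕ → Term) : Term → Term
  | .atom a => .atom a
  | .var x => σ x
  | .bin o p q => .bin o (p.subst σ) (q.subst σ)
  | .priv t => .priv (t.subst σ)
  | .aci L => .aci (L.attach.map fun p => p.1.subst σ)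
decreasing_by
  all_goals simp_wf
  all_goals first
    | omega
    | (have := List.sizeOf_lt_of_mem p.2; omega)

def Term.elems : Term → Set Term
  | .aci L => ⋃ p ∈ L.attach, p.1.elems
  | t => {t}
decreasing_by
  have := List.sizeOf_lt_of_mem p.2; simp_wf; omega

def Term.subDag : Term → Set Term
  | .atom a => {.atom a}
  | .var x => {.var x}
  | .bin o p q => insert (.bin o p q) (p.subDag ∪ q.subDag)
  | .priv t => insert (.priv t) t.subDag
  | .aci L => insert (.aci L) (⋃ p ∈ L.attach, p.1.subDag)
decreasing_by
  all_goals simp_wf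
  all_goals first
    | omega
    | (have := List.sizeOf_lt_of_mem p.2; omega)

def Term.vars (t : Term) : Set ℕ := {x | Term.var x ∈ t.subDag}

def Term.Ground (t : Term) : Prop := t.vars = ∅

/-- Specification of the quasi-subterm function `sub`. -/
structure SubSpec where
  sub : Term → Set Term
  sub_atom : ∀ a, sub (.atom a) = {.atom a}
  sub_var : ∀ x, sub (.var x) = {.var x}
  sub_priv : ∀ t, sub (.priv t) = insert (.priv t) (sub t)
  sub_bin : ∀ o p q, sub (.bin o p q) = insert (.bin o p q) (sub p ∪ sub q)
  sub_aci : ∀ L, sub (.aci L) = insert (.aci L) (⋃ p ∈ (Term.aci L).elems, sub p)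

/-- Specification of the ACI normal form with respect to a strict total order `lt`. -/
structure NormSpec (lt : Term → Term → Prop) where
  nf : Term → Term
  nf_atom : ∀ a, nf (.atom a) = .atom a
  nf_var  : ∀ x, nf (.var x) = .var x
  nf_bin  : ∀ o p q, nf (.bin o p q) = .bin o (nf p) (nf q)
  nf_priv : ∀ t, nf (.priv t) = .priv (nf t)
  nf_aci_single : ∀ L t', nf '' (Term.aci L).elems = {t'} → nf (.aci L) = t'
  nf_aci : ∀ L, (¬ ∃ t', nf '' (Term.aci L).elems = {t'}) →
      ∃ L' : List Term, List.Pairwise lt L' ∧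
        (∀ s, s ∈ L' ↔ s ∈ nf '' (Term.aci L).elems) ∧ nf (.aci L) = .aci L'

/-- The derivable closure of a set `E` of terms under a deduction system `R`,
given as a set of rules (premises, conclusion): the least superset of `E`
closed under the rules. -/
inductive Der (R : Set (Set Term × Term)) (E : Set Term) : Term → Prop where
  | base {t : Term} : t ∈ E → Der R E t
  | step {l : Set Term} {r : Term} : (l, r) ∈ R → (∀ s ∈ l, Der R E s) → Der R E r

/-- The composition rules of the DY+ACI deduction system (for normal form `nf`). -/
inductive DYComp (nf : Term → Term) : Set Term → Term → Prop where
  | enc  (t₁ t₂ : Term) : DYComp nf {t₁, t₂} (nf (.bin .enc t₁ t₂))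
  | aenc (t₁ t₂ : Term) : DYComp nf {t₁, t₂} (nf (.bin .aenc t₁ t₂))
  | pair (t₁ t₂ : Term) : DYComp nf {t₁, t₂} (nf (.bin .pair t₁ t₂))
  | sig  (t₁ t₂ : Term) : DYComp nf {t₁, .priv t₂} (nf (.bin .sig t₁ (.priv t₂)))
  | aci  (L : List Term) (h : L ≠ []) : DYComp nf {t | t ∈ L} (nf (.aci L))

/-- The composition rules of DY+ACI other than the ACI-set construction rule. -/
inductive DYCompNoACI (nf : Term → Term) : Set Term → Term → Prop where
  | enc  (t₁ t₂ : Term) : DYCompNoACI nf {t₁, t₂} (nf (.bin .enc t₁ t₂))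
  | aenc (t₁ t₂ : Term) : DYCompNoACI nf {t₁, t₂} (nf (.bin .aenc t₁ t₂))
  | pair (t₁ t₂ : Term) : DYCompNoACI nf {t₁, t₂} (nf (.bin .pair t₁ t₂))
  | sig  (t₁ t₂ : Term) : DYCompNoACI nf {t₁, .priv t₂} (nf (.bin .sig t₁ (.priv t₂)))

/-- The decomposition rules of the DY+ACI deduction system. -/
inductive DYDecomp (nf : Term → Term) : Set Term → Term → Prop where
  | enc  (t₁ t₂ : Term) : DYDecomp nf {.bin .enc t₁ t₂, nf t₂} (nf t₁)
  | aenc (t₁ t₂ : Term) : DYDecomp nf {.bin .aenc t₁ t₂, nf (.priv t₂)} (nf t₁)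
  | fst  (t₁ t₂ : Term) : DYDecomp nf {.bin .pair t₁ t₂} (nf t₁)
  | snd  (t₁ t₂ : Term) : DYDecomp nf {.bin .pair t₁ t₂} (nf t₂)
  | aci  (L : List Term) (t : Term) (h : t ∈ L) : DYDecomp nf {.aci L} (nf t)

/-- The DY+ACI deduction system as a set of rules. -/
def DYACI (nf : Term → Term) : Set (Set Term × Term) :=
  {p | DYComp nf p.1 p.2 ∨ DYDecomp nf p.1 p.2}

/-- A ground substitution `σ` is a model of a constraint system
`S = {Eᵢ ▷ tᵢ}` if `⌈tᵢσ⌉` is derivable from `⌈Eᵢσ⌉` in DY+ACI. -/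
def Models (nf : Term → Term) (σ : ℕ → Term) (S : List (Set Term × Term)) : Prop :=
  ∀ c ∈ S, Der (DYACI nf) (nf '' ((fun t => t.subst σ) '' c.1)) (nf (c.2.subst σ))

/-- All terms occurring in a constraint system. -/
def termsOf (S : List (Set Term × Term)) : Set Term :=
  ⋃ c ∈ S, c.1 ∪ {c.2}

/-- DAG-subterms of a constraint system. -/
def subDagS (S : List (Set Term × Term)) : Set Term :=
  ⋃ t ∈ termsOf S, t.subDag

/-- Variables of a constraint system. -/
def varsS (S : List (Set Term × Term)) : Set ℕ :=
  {x | Term.var x ∈ subDagS S}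

/-- Applying a substitution to a constraint system. -/
def substS (θ : ℕ → Term) (S : List (Set Term × Term)) : List (Set Term × Term) :=
  S.map fun c => ((fun t => t.subst θ) '' c.1, c.2.subst θ)

/-- The domain of a substitution. -/
def dom (θ : ℕ → Term) : Set ℕ := {x | θ x ≠ .var x}

/-! Every DAG-subterm of `⌈t⌉` is the normal form of a DAG-subterm of `t`: normalisation commutes
with the free constructors, and an ACI node normalises either to the normal form of one of its
flattened elements or to an ACI node whose members are such normal forms. So `sub_dag ⌈t⌉` lies in
the image of the finite set `sub_dag t` under `⌈·⌉`, which has at most `|sub_dag t|` elements. -/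

namespace Term

theorem subDag_aci (L : List Term) :
    (aci L).subDag = insert (aci L) (⋃ p ∈ L, p.subDag) := by
  rw [subDag]
  ext s
  simp

theorem elems_aci (L : List Term) : (aci L).elems = ⋃ p ∈ L, p.elems := by
  rw [elems]
  ext s
  simp

theorem mem_subDag_self (t : Term) : t ∈ t.subDag := by
  cases t <;> simp [subDag]

theorem subDag_subset_subDag_aci {L : List Term} {p : Term} (hp : p ∈ L) :
    p.subDag ⊆ (aci L).subDag := by
  rw [subDag_aci]
  exact fun s hs => Set.mem_insert_of_mem _ (Set.mem_biUnion hp hs)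

theorem subDag_finite : ∀ t : Term, t.subDag.Finite
  | atom _ | var _ => by simp [subDag]
  | bin _ p q => by
    rw [subDag]
    exact ((subDag_finite p).union (subDag_finite q)).insert _
  | priv u => by
    rw [subDag]
    exact (subDag_finite u).insert _
  | aci L => by
    rw [subDag_aci]
    exact (L.finite_toSet.biUnion fun p _ => subDag_finite p).insert _
decreasing_by
  all_goals simp_wf
  all_goals first | omega | (have := List.sizeOf_lt_of_mem ‹_ ∈ L›; omega)

theorem sizeOf_le_of_mem_elems : ∀ {t s : Term}, s ∈ t.elems → sizeOf s ≤ sizeOf t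
  | aci L, s, hs => by
    simp only [elems_aci, Set.mem_iUnion₂] at hs
    obtain ⟨p, hp, hsp⟩ := hs
    have := List.sizeOf_lt_of_mem hp
    have := sizeOf_le_of_mem_elems hsp
    simp only [aci.sizeOf_spec]
    omega
  | atom _, _, hs | var _, _, hs | bin _ _ _, _, hs | priv _, _, hs => by
    simp only [elems, Set.mem_singleton_iff] at hs
    rw [hs]
decreasing_by
  simp_wf
  omega

theorem sizeOf_lt_of_mem_elems_aci {L : List Term} {s : Term} (hs : s ∈ (aci L).elems) :
    sizeOf s < sizeOf (aci L) := by
  simp only [elems_aci, Set.mem_iUnion₂] at hs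
  obtain ⟨p, hp, hsp⟩ := hs
  have := List.sizeOf_lt_of_mem hp
  have := sizeOf_le_of_mem_elems hsp
  simp only [aci.sizeOf_spec]
  omega

theorem subDag_subset_of_mem_elems : ∀ {t s : Term}, s ∈ t.elems → s.subDag ⊆ t.subDag
  | aci L, s, hs => by
    simp only [elems_aci, Set.mem_iUnion₂] at hs
    obtain ⟨p, hp, hsp⟩ := hs
    have := List.sizeOf_lt_of_mem hp
    exact (subDag_subset_of_mem_elems hsp).trans (subDag_subset_subDag_aci hp)
  | atom _, _, hs | var _, _, hs | bin _ _ _, _, hs | priv _, _, hs => by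
    simp only [elems, Set.mem_singleton_iff] at hs
    rw [hs]
termination_by t => sizeOf t
decreasing_by
  simp_wf
  omega

end Term

namespace NormSpec

variable {lt : Term → Term → Prop} (N : NormSpec lt)

theorem subDag_nf_subset : ∀ t : Term, (N.nf t).subDag ⊆ N.nf '' t.subDag
  | .atom a => by rw [N.nf_atom, Term.subDag]; simp [N.nf_atom]
  | .var x => by rw [N.nf_var, Term.subDag]; simp [N.nf_var]
  | .bin o p q => by
    rw [N.nf_bin, Term.subDag, Term.subDag, Set.image_insert_eq, Set.image_union, ← N.nf_bin]
    exact Set.insert_subset_insert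
      (Set.union_subset_union (subDag_nf_subset p) (subDag_nf_subset q))
  | .priv u => by
    rw [N.nf_priv, Term.subDag, Term.subDag, Set.image_insert_eq, ← N.nf_priv]
    exact Set.insert_subset_insert (subDag_nf_subset u)
  | .aci L => by
    have nf_elem_subset : ∀ u ∈ (Term.aci L).elems,
        (N.nf u).subDag ⊆ N.nf '' (Term.aci L).subDag := fun u hu =>
      (subDag_nf_subset u).trans (Set.image_mono (Term.subDag_subset_of_mem_elems hu))
    by_cases hsingle : ∃ t', N.nf '' (Term.aci L).elems = {t'}
    · obtain ⟨t', ht'⟩ := hsingle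
      obtain ⟨u, hu, rfl⟩ : t' ∈ N.nf '' (Term.aci L).elems := ht' ▸ rfl
      rw [N.nf_aci_single L _ ht']
      exact nf_elem_subset u hu
    · obtain ⟨L', -, hmem, hnf⟩ := N.nf_aci L hsingle
      rw [hnf, Term.subDag_aci]
      refine Set.insert_subset ⟨_, Term.mem_subDag_self _, hnf⟩ 
        (Set.iUnion₂_subset fun p hp => ?_)
      obtain ⟨u, hu, rfl⟩ := (hmem p).1 hp
      exact nf_elem_subset u hu
termination_by t => sizeOf t
decreasing_by
  all_goals simp_wf
  all_goals first
    | omega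
    | (have := Term.sizeOf_lt_of_mem_elems_aci hu; simp only [Term.aci.sizeOf_spec] at this; omega)

end NormSpec

theorem norm_dagsize_le_general (lt : Term → Term → Prop)
    (N : NormSpec lt) : ∀ t : Term, ((N.nf t).subDag).ncard ≤ (t.subDag).ncard := fun t =>
  have hfin := Term.subDag_finite t
  (Set.ncard_le_ncard (N.subDag_nf_subset t) (hfin.image _)).trans (Set.ncard_image_le hfin)

/-- Normalization does not increase DAG-size. -/
theorem norm_dagsize_le (lt : Term → Term → Prop) (hlt : IsStrictTotalOrder Term lt)
    (N : NormSpec lt) : ∀ t : Term, ((N.nf t).subDag).ncard ≤ (t.subDag).ncard :=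
  norm_dagsize_le_general lt N
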